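/- arXiv:2102.00768 — 2 statements merged into one kernel-verified Lean document; each statement's English description precedes it below -/
import Mathlib

section
/- With f(u) = |u|^{p-1}u log^a(2+u^2) and F its antiderivative vanishing at 0, the quantity F(u) - u f(u)/(p+1) is asymptotically equivalent to -(2a/(p+1)^2) |u|^{p+1} log^{a-1}(2+u^2) as |u| → ∞. -/
open Real Filter MeasureTheory

noncomputable def f2 (p a u : ℝ) : ℝ := |u| ^ (p - 1) * u * Real.log (2 + u ^ 2) ^ a

noncomputable def F2F (p a u : ℝ) : ℝ := ∫ v in (0:ℝ)..u, f2 p a v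

lemma lhopital_top (φ ψ φ' ψ' : ℝ → ℝ)
    (hφ : ∀ᶠ u in atTop, HasDerivAt φ (φ' u) u)
    (hψ : ∀ᶠ u in atTop, HasDerivAt ψ (ψ' u) u)
    (hψ'pos : ∀ᶠ u in atTop, 0 < ψ' u)
    (hratio : Tendsto (fun u => φ' u / ψ' u) atTop (nhds 1))
    (hψtop : Tendsto ψ atTop atTop) :
    Tendsto (fun u => φ u / ψ u) atTop (nhds 1) := by
  rw [Metric.tendsto_atTop]
  intro ε hε
  set δ := min (ε / 3) (1/2) with hδdef
  have hδ : 0 < δ := by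
    apply lt_min (by positivity) (by norm_num)
  have hδε : δ ≤ ε / 3 := min_le_left _ _
  have hδ1 : δ ≤ 1/2 := min_le_right _ _
  -- eventually |φ' - ψ'| ≤ δ ψ'
  have h1 : ∀ᶠ u in atTop, |φ' u - ψ' u| ≤ δ * ψ' u := by
    have := (Metric.tendsto_nhds.1 hratio) δ hδ
    filter_upwards [this, hψ'pos] with u hu hpos
    rw [Real.dist_eq] at hu
    have heq : φ' u / ψ' u - 1 = (φ' u - ψ' u) / ψ' u := by field_simp
    rw [heq, abs_div, abs_of_pos hpos, div_lt_iff₀ hpos] at hu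
    linarith
  obtain ⟨u₀, hu₀⟩ := (hφ.and (hψ.and (hψ'pos.and h1))).exists_forall_of_atTop
  have key : ∀ u ≥ u₀, (1 - δ) * (ψ u - ψ u₀) ≤ φ u - φ u₀ ∧
      φ u - φ u₀ ≤ (1 + δ) * (ψ u - ψ u₀) := by
    intro u hu
    have mono : ∀ (g g' : ℝ → ℝ),
        (∀ x ≥ u₀, HasDerivAt g (g' x) x) → (∀ x ≥ u₀, 0 ≤ g' x) →
        g u₀ ≤ g u := by
      intro g g' hg hg'
      have : MonotoneOn g (Set.Ici u₀) := by
        apply monotoneOn_of_deriv_nonneg (convex_Ici u₀)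
        · intro x hx; exact ((hg x hx).differentiableAt).continuousAt.continuousWithinAt
        · intro x hx
          rw [interior_Ici] at hx
          exact ((hg x (le_of_lt hx)).differentiableAt).differentiableWithinAt
        · intro x hx
          rw [interior_Ici] at hx
          rw [(hg x (le_of_lt hx)).deriv]
          exact hg' x (le_of_lt hx)
      exact this Set.self_mem_Ici hu hu
    constructor
    · have := mono (fun x => φ x - (1 - δ) * ψ x) (fun x => φ' x - (1 - δ) * ψ' x)
        (fun x hx => ((hu₀ x hx).1).sub (((hu₀ x hx).2.1).const_mul _))
        (fun x hx => by
          have h := abs_le.1 (hu₀ x hx).2.2.2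
          show 0 ≤ φ' x - (1 - δ) * ψ' x
          have hpos := (hu₀ x hx).2.2.1
          nlinarith [h.1])
      linarith
    · have := mono (fun x => (1 + δ) * ψ x - φ x) (fun x => (1 + δ) * ψ' x - φ' x)
        (fun x hx => (((hu₀ x hx).2.1).const_mul _).sub ((hu₀ x hx).1))
        (fun x hx => by
          have h := abs_le.1 (hu₀ x hx).2.2.2
          show 0 ≤ (1 + δ) * ψ' x - φ' x
          have hpos := (hu₀ x hx).2.2.1
          nlinarith [h.2])
      linarith
  set C := |φ u₀| + 2 * |ψ u₀| + 1 with hC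
  have hCpos : 0 < C := by positivity
  have hev : ∀ᶠ u in atTop, ψ u ≥ max 1 (C / δ) := hψtop.eventually_ge_atTop _
  obtain ⟨u₁, hu₁⟩ := (hev.and (eventually_ge_atTop u₀)).exists_forall_of_atTop
  refine ⟨u₁, fun u hu => ?_⟩
  obtain ⟨hψbig, huu₀⟩ := hu₁ u hu
  have hψ1 : (1:ℝ) ≤ ψ u := le_trans (le_max_left _ _) hψbig
  have hψC : C / δ ≤ ψ u := le_trans (le_max_right _ _) hψbig
  have hψpos : 0 < ψ u := lt_of_lt_of_le one_pos hψ1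
  obtain ⟨hlo, hhi⟩ := key u huu₀
  rw [Real.dist_eq]
  have habs1 : -|ψ u₀| ≤ ψ u₀ := neg_abs_le _
  have habs2 : ψ u₀ ≤ |ψ u₀| := le_abs_self _
  have habs3 : -|φ u₀| ≤ φ u₀ := neg_abs_le _
  have habs4 : φ u₀ ≤ |φ u₀| := le_abs_self _
  have hnum : |φ u - ψ u| ≤ δ * ψ u + C := by
    rw [abs_le]
    constructor
    · nlinarith [mul_nonneg (by linarith : (0:ℝ) ≤ 1 - δ) (by linarith : (0:ℝ) ≤ |ψ u₀| - ψ u₀),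
        mul_nonneg (by linarith : (0:ℝ) ≤ 1 - δ) (sub_nonneg.2 hψ1)]
    · nlinarith [mul_nonneg (by linarith : (0:ℝ) ≤ 1 + δ) (by linarith : (0:ℝ) ≤ |ψ u₀| + ψ u₀)]
  have hfin : |φ u / ψ u - 1| ≤ δ + C / ψ u := by
    rw [show φ u / ψ u - 1 = (φ u - ψ u) / ψ u by field_simp, abs_div, abs_of_pos hψpos,
      div_le_iff₀ hψpos]
    have heq : (δ + C / ψ u) * ψ u = δ * ψ u + C := by field_simp
    rw [heq]; exact hnum
  have hCψ : C / ψ u ≤ δ := by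
    rw [div_le_iff₀ hψpos]
    calc C = δ * (C / δ) := by field_simp
    _ ≤ δ * ψ u := by nlinarith
  calc |φ u / ψ u - 1| ≤ δ + δ := by linarith
  _ < ε := by linarith

lemma f2_cont (p a : ℝ) (hp : 1 < p) : Continuous (f2 p a) := by
  have h2 : ∀ u : ℝ, (0:ℝ) < 2 + u ^ 2 := fun u => by positivity
  have hL : ∀ u : ℝ, 0 < Real.log (2 + u ^ 2) := fun u =>
    Real.log_pos (by nlinarith [sq_nonneg u])
  apply Continuous.mul
  · apply Continuous.mul
    · exact continuous_abs.rpow_const (fun x => Or.inr (by linarith))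
    · exact continuous_id
  · apply Continuous.rpow_const
    · exact (Continuous.log (by continuity) (fun x => (h2 x).ne'))
    · exact fun x => Or.inl (hL x).ne'

lemma f2_odd (p a u : ℝ) : f2 p a (-u) = - f2 p a u := by
  simp [f2, abs_neg, neg_sq]

lemma F2F_even (p a u : ℝ) : F2F p a (-u) = F2F p a u := by
  have h := intervalIntegral.integral_comp_neg (a := (0:ℝ)) (b := u) (f := f2 p a)
  simp only [neg_zero] at h
  have h2 : (∫ x in (0:ℝ)..u, f2 p a (-x)) = ∫ x in (0:ℝ)..u, -(f2 p a x) := by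
    congr 1; ext x; exact f2_odd p a x
  rw [h2, intervalIntegral.integral_neg] at h
  have h3 : (∫ x in (-u)..(0:ℝ), f2 p a x) = - ∫ x in (0:ℝ)..(-u), f2 p a x := by
    rw [intervalIntegral.integral_symm]
  rw [h3] at h
  unfold F2F
  linarith

lemma f2_eq_of_pos (p a : ℝ) {x : ℝ} (hx : 0 < x) :
    f2 p a x = x ^ p * Real.log (2 + x ^ 2) ^ a := by
  unfold f2
  rw [abs_of_pos hx]
  rw [show p = (p - 1) + 1 by ring, Real.rpow_add_one hx.ne']
  ring_nf

theorem stmt2 (p a : ℝ) (hp : 1 < p) (ha : a ≠ 0) :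
    Tendsto (fun u : ℝ =>
        (F2F p a u - u * f2 p a u / (p + 1)) /
          (-(2 * a / (p + 1) ^ 2) * |u| ^ (p + 1) * Real.log (2 + u ^ 2) ^ (a - 1)))
      (atTop ⊔ atBot) (nhds 1) := by
  set R : ℝ → ℝ := fun u =>
        (F2F p a u - u * f2 p a u / (p + 1)) /
          (-(2 * a / (p + 1) ^ 2) * |u| ^ (p + 1) * Real.log (2 + u ^ 2) ^ (a - 1)) with hR
  have hp1 : (0:ℝ) < p + 1 := by linarith
  set c : ℝ := -(2 * a / (p + 1) ^ 2) with hc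
  have hc0 : c ≠ 0 := by
    simp only [hc, neg_ne_zero]
    exact div_ne_zero (by simpa using ha) (by positivity)
  have h2 : ∀ u : ℝ, (0:ℝ) < 2 + u ^ 2 := fun u => by positivity
  have hLpos : ∀ u : ℝ, 0 < Real.log (2 + u ^ 2) := fun u =>
    Real.log_pos (by nlinarith [sq_nonneg u])
  set L : ℝ → ℝ := fun u => Real.log (2 + u ^ 2) with hLdef
  -- auxiliary tendsto facts
  have htop2 : Tendsto (fun u : ℝ => 2 + u ^ 2) atTop atTop :=
    tendsto_atTop_add_const_left _ 2 (tendsto_pow_atTop two_ne_zero)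
  have hLtop : Tendsto L atTop atTop := Real.tendsto_log_atTop.comp htop2
  have hA : Tendsto (fun u : ℝ => u ^ 2 / (2 + u ^ 2)) atTop (nhds 1) := by
    have h0 : Tendsto (fun u : ℝ => 2 / (2 + u ^ 2)) atTop (nhds 0) :=
      Tendsto.div_atTop tendsto_const_nhds htop2
    have := (tendsto_const_nhds : Tendsto (fun _ : ℝ => (1:ℝ)) atTop (nhds 1)).sub h0
    rw [sub_zero] at this
    refine this.congr (fun u => ?_)
    field_simp
    ring
  have hB : Tendsto (fun u : ℝ => u ^ 2 / ((2 + u ^ 2) * L u)) atTop (nhds 0) := by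
    have := hA.mul hLtop.inv_tendsto_atTop
    rw [mul_zero] at this
    refine this.congr (fun u => ?_)
    rw [show (L⁻¹ : ℝ → ℝ) u = (L u)⁻¹ from rfl]
    field_simp
  have hbr : Tendsto (fun u : ℝ => (p + 1) + 2 * (a - 1) * (u ^ 2 / ((2 + u ^ 2) * L u)))
      atTop (nhds (p + 1)) := by
    have := (tendsto_const_nhds : Tendsto (fun _ : ℝ => (p+1:ℝ)) atTop (nhds (p+1))).add
      ((tendsto_const_nhds : Tendsto (fun _ : ℝ => (2*(a-1):ℝ)) atTop (nhds (2*(a-1)))).mul hB)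
    simpa using this
  -- the shifted functions
  set φ₀ : ℝ → ℝ := fun u => (F2F p a u - u * f2 p a u / (p + 1)) / c with hφ₀
  set ψ₀ : ℝ → ℝ := fun u => u ^ (p + 1) * L u ^ (a - 1) with hψ₀
  set m : ℝ → ℝ := fun u => u ^ p * L u ^ (a - 1) with hm
  set φ' : ℝ → ℝ := fun u => m u * ((p + 1) * (u ^ 2 / (2 + u ^ 2))) with hφ'
  set ψ' : ℝ → ℝ := fun u => m u * ((p + 1) + 2 * (a - 1) * (u ^ 2 / ((2 + u ^ 2) * L u))) with hψ'
  -- derivative of L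
  have hLderiv : ∀ u : ℝ, HasDerivAt L (2 * u / (2 + u ^ 2)) u := by
    intro u
    have h := ((hasDerivAt_pow 2 u).const_add 2).log (h2 u).ne'
    simpa using h
  -- derivative of f2 at positive points
  have hf2deriv : ∀ u : ℝ, 0 < u → HasDerivAt (f2 p a)
      (p * u ^ (p - 1) * L u ^ a + u ^ p * (2 * u / (2 + u ^ 2) * a * L u ^ (a - 1))) u := by
    intro u hu
    have hg1 : HasDerivAt (fun x : ℝ => x ^ p) (p * u ^ (p - 1)) u :=
      Real.hasDerivAt_rpow_const (Or.inl hu.ne')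
    have hg2 : HasDerivAt (fun x : ℝ => L x ^ a) (2 * u / (2 + u ^ 2) * a * L u ^ (a - 1)) u :=
      (hLderiv u).rpow_const (Or.inl (hLpos u).ne')
    have hg := hg1.mul hg2
    apply hg.congr_of_eventuallyEq
    filter_upwards [Ioi_mem_nhds hu] with x hx
    exact f2_eq_of_pos p a hx
  -- HasDerivAt for φ₀ eventually
  have hφd : ∀ᶠ u in atTop, HasDerivAt φ₀ (φ' u) u := by
    filter_upwards [eventually_gt_atTop (0:ℝ)] with u hu
    have hF : HasDerivAt (F2F p a) (f2 p a u) u := by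
      have hcont := f2_cont p a hp
      exact intervalIntegral.integral_hasDerivAt_right
        ((hcont.intervalIntegrable _ _))
        (hcont.stronglyMeasurable.stronglyMeasurableAtFilter)
        hcont.continuousAt
    have hnum := (hF.sub (((hasDerivAt_id u).mul (hf2deriv u hu)).div_const (p + 1))).div_const c
    refine hnum.congr_deriv ?_
    symm
    have hf2u : f2 p a u = u ^ p * L u ^ a := f2_eq_of_pos p a hu
    have hup : u ^ (p - 1) = u ^ p / u := by
      rw [Real.rpow_sub_one hu.ne']
    have hLa : L u ^ a = L u ^ (a - 1) * L u := by
      nth_rewrite 1 [show a = (a - 1) + 1 by ring]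
      exact Real.rpow_add_one (hLpos u).ne' _
    simp only [hφ', hm, hf2u, hup, hLa, hc, id]
    field_simp
    ring
  -- HasDerivAt for ψ₀ eventually
  have hψd : ∀ᶠ u in atTop, HasDerivAt ψ₀ (ψ' u) u := by
    filter_upwards [eventually_gt_atTop (0:ℝ)] with u hu
    have hg1 : HasDerivAt (fun x : ℝ => x ^ (p + 1)) ((p + 1) * u ^ p) u := by
      have := Real.hasDerivAt_rpow_const (x := u) (p := p + 1) (Or.inl hu.ne')
      simpa using this
    have hg2 : HasDerivAt (fun x : ℝ => L x ^ (a - 1))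
        (2 * u / (2 + u ^ 2) * (a - 1) * L u ^ (a - 1 - 1)) u :=
      (hLderiv u).rpow_const (Or.inl (hLpos u).ne')
    have hg := hg1.mul hg2
    apply HasDerivAt.congr_deriv hg
    have hup : u ^ (p + 1) = u ^ p * u := Real.rpow_add_one hu.ne' p
    have hLa : L u ^ (a - 1 - 1) = L u ^ (a - 1) / L u := Real.rpow_sub_one (hLpos u).ne' _
    simp only [hψ', hm, hup, hLa]
    field_simp
  -- positivity of m
  have hmpos : ∀ u : ℝ, 0 < u → 0 < m u := by
    intro u hu
    exact mul_pos (Real.rpow_pos_of_pos hu p) (Real.rpow_pos_of_pos (hLpos u) _)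
  -- ψ' positive eventually
  have hψ'pos : ∀ᶠ u in atTop, 0 < ψ' u := by
    have hev := hbr.eventually (eventually_gt_nhds (by linarith : (0:ℝ) < p + 1))
    filter_upwards [hev, eventually_gt_atTop (0:ℝ)] with u h1 h2'
    exact mul_pos (hmpos u h2') h1
  -- ratio tendsto 1
  have hratio : Tendsto (fun u => φ' u / ψ' u) atTop (nhds 1) := by
    have hd : Tendsto (fun u : ℝ => ((p + 1) * (u ^ 2 / (2 + u ^ 2))) /
        ((p + 1) + 2 * (a - 1) * (u ^ 2 / ((2 + u ^ 2) * L u)))) atTop (nhds 1) := by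
      have := ((tendsto_const_nhds : Tendsto (fun _ : ℝ => (p+1:ℝ)) atTop (nhds (p+1))).mul hA).div hbr
        (by linarith : p + 1 ≠ 0)
      rw [mul_one, div_self (by linarith : p + 1 ≠ 0)] at this
      exact this
    apply hd.congr'
    filter_upwards [eventually_gt_atTop (0:ℝ)] with u hu
    rw [hφ', hψ']
    rw [mul_div_mul_left _ _ (hmpos u hu).ne']
  -- ψ₀ tendsto atTop
  have hψtop : Tendsto ψ₀ atTop atTop := by
    have hlil : (fun u : ℝ => L u ^ (1 - a)) =o[atTop] (fun u : ℝ => (2 + u ^ 2) ^ ((p + 1) / 2)) :=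
      (isLittleO_log_rpow_rpow_atTop (1 - a) (by linarith : (0:ℝ) < (p + 1) / 2)).comp_tendsto htop2
    have hq : Tendsto (fun u : ℝ => L u ^ (1 - a) / (2 + u ^ 2) ^ ((p + 1) / 2))
        atTop (nhds 0) := hlil.tendsto_div_nhds_zero
    have hqpos : ∀ u : ℝ, 0 < L u ^ (1 - a) / (2 + u ^ 2) ^ ((p + 1) / 2) := fun u =>
      div_pos (Real.rpow_pos_of_pos (hLpos u) _) (Real.rpow_pos_of_pos (h2 u) _)
    have ht : Tendsto (fun u : ℝ => (2 + u ^ 2) ^ ((p + 1) / 2) * L u ^ (a - 1)) atTop atTop := by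
      have := (tendsto_nhdsWithin_of_tendsto_nhds_of_eventually_within _ hq
        (Eventually.of_forall hqpos)).inv_tendsto_nhdsGT_zero
      refine this.congr (fun u => ?_)
      rw [Pi.inv_apply, div_eq_mul_inv, mul_inv, inv_inv,
        ← Real.rpow_neg (hLpos u).le, show -(1 - a) = a - 1 by ring, mul_comm]
    apply tendsto_atTop_mono' _ _ ((ht.const_mul_atTop
      (show (0:ℝ) < (3:ℝ) ^ (-((p + 1) / 2)) by positivity)))
    filter_upwards [eventually_ge_atTop (1:ℝ)] with u hu
    have hu0 : (0:ℝ) < u := lt_of_lt_of_le one_pos hu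
    have key : (3:ℝ) ^ (-((p + 1) / 2)) * (2 + u ^ 2) ^ ((p + 1) / 2) ≤ u ^ (p + 1) := by
      have h1 : (2 + u ^ 2) ≤ 3 * u ^ 2 := by nlinarith
      have h3 : ((2 + u ^ 2) : ℝ) ^ ((p + 1) / 2) ≤ (3 * u ^ 2) ^ ((p + 1) / 2) :=
        Real.rpow_le_rpow (h2 u).le h1 (by linarith)
      have h4 : ((3:ℝ) * u ^ 2) ^ ((p + 1) / 2) = 3 ^ ((p + 1) / 2) * u ^ (p + 1) := by
        rw [Real.mul_rpow (by norm_num) (by positivity)]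
        congr 1
        rw [← Real.rpow_natCast u 2, ← Real.rpow_mul hu0.le,
          show (2:ℕ) * ((p + 1) / 2) = p + 1 by push_cast; ring]
      calc (3:ℝ) ^ (-((p + 1) / 2)) * (2 + u ^ 2) ^ ((p + 1) / 2)
          ≤ (3:ℝ) ^ (-((p + 1) / 2)) * ((3:ℝ) * u ^ 2) ^ ((p + 1) / 2) := by
            apply mul_le_mul_of_nonneg_left h3 (by positivity)
        _ = u ^ (p + 1) := by
            rw [h4, ← mul_assoc, ← Real.rpow_add (by norm_num : (0:ℝ) < 3),
              neg_add_cancel, Real.rpow_zero, one_mul]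
    calc (3:ℝ) ^ (-((p + 1) / 2)) * ((2 + u ^ 2) ^ ((p + 1) / 2) * L u ^ (a - 1))
        = ((3:ℝ) ^ (-((p + 1) / 2)) * (2 + u ^ 2) ^ ((p + 1) / 2)) * L u ^ (a - 1) := by ring
      _ ≤ u ^ (p + 1) * L u ^ (a - 1) :=
          mul_le_mul_of_nonneg_right key (Real.rpow_pos_of_pos (hLpos u) _).le
      _ = ψ₀ u := rfl
  -- conclude atTop
  have hTop : Tendsto R atTop (nhds 1) := by
    have := lhopital_top φ₀ ψ₀ φ' ψ' hφd hψd hψ'pos hratio hψtop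
    apply this.congr'
    filter_upwards [eventually_gt_atTop (0:ℝ)] with u hu
    rw [hR, hφ₀, hψ₀]
    simp only
    rw [abs_of_pos hu, div_div, mul_assoc]
  -- evenness of R
  have hReven : ∀ u : ℝ, R (-u) = R u := by
    intro u
    rw [hR]
    simp only [F2F_even, f2_odd, abs_neg, neg_sq, mul_neg, neg_mul, neg_neg]
  have hBot : Tendsto R atBot (nhds 1) := by
    have h1 : Tendsto (fun u => R (-u)) atTop (nhds 1) := by
      simpa only [hReven] using hTop
    have := h1.comp tendsto_neg_atBot_atTop
    simpa only [Function.comp_def, neg_neg] using this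
  rw [tendsto_sup]
  exact ⟨hTop, hBot⟩
end

section
/- Suppose g : [s_0, ∞) → ℝ is C^1, g(s) ≥ −1 for all s, g is nonincreasing, and there is a C^1 function I with I'(s) ≥ −(p+3) g(s) + c s^{b(p-1)/4} I(s)^{(p+3)/4} and I ≥ 0, c > 0, p > 1, b ≥ 0. If g(s_1) < −1 for some s_1 then I'(s) ≥ (p+3) + c s^{b(p-1)/4} I(s)^{(p+3)/4} for all s ≥ s_1, and consequently I blows up in finite time. -/
open Real Set

theorem stmt17 (p b c s0 s1 : ℝ) (hp : 1 < p) (hc : 0 < c) (hb : 0 ≤ b)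
    (hs1 : s1 ∈ Set.Ici s0)
    (g I d : ℝ → ℝ)
    (hg : AntitoneOn g (Set.Ici s0))
    (hI : ∀ s ∈ Set.Ici s0, HasDerivAt I (d s) s)
    (hIpos : ∀ s ∈ Set.Ici s0, 0 ≤ I s)
    (hineq : ∀ s ∈ Set.Ici s0,
      -(p + 3) * g s + c * s ^ (b * (p - 1) / 4) * I s ^ ((p + 3) / 4) ≤ d s)
    (hg1 : g s1 < -1) :
    (∀ s ∈ Set.Ici s1,
      (p + 3) + c * s ^ (b * (p - 1) / 4) * I s ^ ((p + 3) / 4) ≤ d s) ∧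
    False := by
  set α := b * (p - 1) / 4 with hα
  set q := (p + 3) / 4 with hq
  have hq1 : 1 < q := by unfold q; linarith
  have hp3 : (0:ℝ) < p + 3 := by linarith
  have hα0 : 0 ≤ α := by
    have h1 : 0 ≤ p - 1 := by linarith
    have := mul_nonneg hb h1
    unfold α; linarith
  -- Part 1
  have pf1 : ∀ s ∈ Set.Ici s1, (p + 3) + c * s ^ α * I s ^ q ≤ d s := by
    intro s hs
    have hs0 : s ∈ Set.Ici s0 := Set.mem_Ici.2 (le_trans (Set.mem_Ici.1 hs1) (Set.mem_Ici.1 hs))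
    have hgs : g s ≤ g s1 := hg hs1 hs0 hs
    have h1 : (p + 3) ≤ -(p + 3) * g s := by nlinarith
    have := hineq s hs0
    linarith
  refine ⟨pf1, ?_⟩
  -- Part 2
  set S := max s1 1 with hS
  have hS1 : s1 ≤ S := le_max_left _ _
  have hSone : (1:ℝ) ≤ S := le_max_right _ _
  have hSs1 : ∀ s, S ≤ s → s1 ≤ s := fun s h => le_trans hS1 h
  have hSs0 : ∀ s, S ≤ s → s ∈ Set.Ici s0 := fun s h => le_trans hs1 (hSs1 s h)
  -- for s ≥ S, nonneg extra term and d ≥ p+3, d ≥ c * I^q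
  have key : ∀ s, S ≤ s → (p + 3) + c * I s ^ q ≤ d s := by
    intro s hs
    have h1 : (1:ℝ) ≤ s := le_trans hSone hs
    have hsa : 1 ≤ s ^ α := Real.one_le_rpow h1 hα0
    have hIq : 0 ≤ I s ^ q := Real.rpow_nonneg (hIpos s (hSs0 s hs)) q
    have := pf1 s (hSs1 s hs)
    nlinarith [mul_nonneg (mul_nonneg hc.le (sub_nonneg.2 hsa)) hIq]
  -- I s - (p+3) s is monotone on Ici S
  have hmono : MonotoneOn (fun s => I s - (p + 3) * s) (Set.Ici S) := by
    apply monotoneOn_of_hasDerivWithinAt_nonneg (convex_Ici S)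
      (f' := fun s => d s - (p + 3))
    · intro x hx
      have hlin : HasDerivAt (fun s : ℝ => (p+3)*s) (p+3) x := by
        simpa using (hasDerivAt_id x).const_mul (p+3)
      exact ((hI x (hSs0 x hx)).sub hlin).continuousAt.continuousWithinAt
    · intro x hx
      rw [interior_Ici] at hx
      have hlin : HasDerivAt (fun s : ℝ => (p+3)*s) (p+3) x := by
        simpa using (hasDerivAt_id x).const_mul (p+3)
      exact ((hI x (hSs0 x hx.le)).sub hlin).hasDerivWithinAt
    · intro x hx
      rw [interior_Ici] at hx
      have hIq : 0 ≤ I x ^ q := Real.rpow_nonneg (hIpos x (hSs0 x hx.le)) q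
      have := key x hx.le
      nlinarith
  set T := S + 1 / (p + 3) with hT
  have hST : S ≤ T := by
    have h0 : 0 < 1 / (p+3) := by positivity
    rw [hT]; linarith
  have hIT : ∀ s, T ≤ s → 1 ≤ I s := by
    intro s hs
    have hSs : S ≤ s := le_trans hST hs
    have hmm := hmono Set.self_mem_Ici hSs hSs
    simp only at hmm
    have hIS : 0 ≤ I S := hIpos S (hSs0 S le_rfl)
    have h1 : S + 1 / (p+3) ≤ s := by rw [hT] at hs; exact hs
    have h2 : (1:ℝ) ≤ (p+3) * (s - S) := by
      have h3 := mul_le_mul_of_nonneg_left (by linarith : 1/(p+3) ≤ s - S) hp3.le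
      have h4 : (p+3) * (1/(p+3)) = 1 := by field_simp
      linarith
    nlinarith
  -- ψ antitone
  have hTs0 : ∀ s, T ≤ s → s ∈ Set.Ici s0 := fun s h => hSs0 s (le_trans hST h)
  have hIpos' : ∀ s, T ≤ s → 0 < I s := fun s h => lt_of_lt_of_le one_pos (hIT s h)
  have hderivψ : ∀ x, T ≤ x →
      HasDerivAt (fun s => I s ^ (1 - q) + (q - 1) * c * s)
        (d x * (1 - q) * I x ^ (1 - q - 1) + (q - 1) * c) x := by
    intro x hx
    exact ((hI x (hTs0 x hx)).rpow_const (Or.inl (ne_of_gt (hIpos' x hx)))).add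
      (by simpa using (hasDerivAt_id x).const_mul ((q-1)*c))
  have hψnonpos : ∀ x, T < x → d x * (1 - q) * I x ^ (1 - q - 1) + (q - 1) * c ≤ 0 := by
    intro x hx
    have hIx : 0 < I x := hIpos' x hx.le
    have hIxq : 0 < I x ^ q := Real.rpow_pos_of_pos hIx q
    have hd : c * I x ^ q ≤ d x := by
      have := key x (le_trans hST hx.le); nlinarith
    have hX : 0 < I x ^ (-q) := Real.rpow_pos_of_pos hIx (-q)
    have hmul : I x ^ q * I x ^ (-q) = 1 := by
      rw [← Real.rpow_add hIx]; simp
    have hdX : c ≤ d x * I x ^ (-q) := by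
      calc c = c * (I x ^ q * I x ^ (-q)) := by rw [hmul]; ring
        _ = (c * I x ^ q) * I x ^ (-q) := by ring
        _ ≤ d x * I x ^ (-q) := by exact mul_le_mul_of_nonneg_right hd hX.le
    have hexp : 1 - q - 1 = -q := by ring
    rw [hexp]
    nlinarith [mul_nonneg (sub_nonneg.2 hdX) (by linarith : (0:ℝ) ≤ q - 1)]
  have hanti : AntitoneOn (fun s => I s ^ (1 - q) + (q - 1) * c * s) (Set.Ici T) := by
    apply antitoneOn_of_hasDerivWithinAt_nonpos (convex_Ici T)
      (f' := fun x => d x * (1 - q) * I x ^ (1 - q - 1) + (q - 1) * c)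
    · intro x hx
      exact (hderivψ x hx).continuousAt.continuousWithinAt
    · intro x hx
      rw [interior_Ici] at hx
      exact (hderivψ x hx.le).hasDerivWithinAt
    · intro x hx
      rw [interior_Ici] at hx
      exact hψnonpos x hx
  -- contradiction
  have hqc : 0 < (q - 1) * c := by
    have : 0 < q - 1 := by linarith
    positivity
  set A := I T ^ (1 - q) with hA
  have hA0 : 0 ≤ A := Real.rpow_nonneg (hIpos T (hTs0 T le_rfl)) _
  set s' := T + (A + 1) / ((q - 1) * c) with hs'
  have hTs' : T ≤ s' := by
    have h0 : 0 < (A + 1) / ((q - 1) * c) := by positivity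
    rw [hs']; linarith
  have := hanti Set.self_mem_Ici hTs' hTs'
  simp only at this
  have hIs' : 0 ≤ I s' ^ (1 - q) := Real.rpow_nonneg (hIpos s' (hTs0 s' hTs')) _
  have hcomp : (q - 1) * c * s' = (q - 1) * c * T + (A + 1) := by
    have hne : (q - 1) * c ≠ 0 := hqc.ne'
    rw [hs', mul_add, mul_div_cancel₀ _ hne]
  rw [hcomp] at this
  linarith
end
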